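/- Let L_2 be the set of Kripke trees T over AP = {p} such that there exists an infinite path π from the root on which p never holds and such that at every even position 2i, the node π(2i) has some child satisfying p. Then no CCTL* formula φ satisfies L(φ) = L_2. -/

import Mathlib

mutual
/-- State formulas of Counting-CTL* (CCTL*). -/
inductive SForm (AP : Type) : Type where
  | top : SForm AP
  | atom : AP → SForm AP
  | not : SForm AP → SForm AP
  | and : SForm AP → SForm AP → SForm AP
  | ex : PForm AP → SForm AP
  | cnt : ℕ → SForm AP → SForm AP
/-- Path formulas of Counting-CTL* (CCTL*). -/
inductive PForm (AP : Type) : Type where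
  | state : SForm AP → PForm AP
  | not : PForm AP → PForm AP
  | and : PForm AP → PForm AP → PForm AP
  | next : PForm AP → PForm AP
  | until_ : PForm AP → PForm AP → PForm AP
end

/-- `T` is a tree: nonempty and prefix-closed. -/
def IsTree {D : Type} (T : Set (List D)) : Prop :=
  [] ∈ T ∧ ∀ (w : List D) (d : D), w ++ [d] ∈ T → w ∈ T

/-- Every node of `T` has a child. -/
def NonBlocking {D : Type} (T : Set (List D)) : Prop :=
  ∀ w ∈ T, ∃ d : D, w ++ [d] ∈ T

/-- `π` is an infinite path of `T` starting at node `w`. -/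
def IsPathFrom {D : Type} (T : Set (List D)) (π : ℕ → List D) (w : List D) : Prop :=
  π 0 = w ∧ ∀ i, π i ∈ T ∧ ∃ d : D, π (i + 1) = π i ++ [d]

mutual
/-- Satisfaction of a CCTL* state formula at a node of the Kripke tree `(T, Lab)`. -/
def SatS {D AP : Type} (T : Set (List D)) (Lab : List D → Set AP) :
    SForm AP → List D → Prop
  | .top, _ => True
  | .atom p, w => p ∈ Lab w
  | .not φ, w => ¬ SatS T Lab φ w
  | .and φ ψ, w => SatS T Lab φ w ∧ SatS T Lab ψ w
  | .ex ψ, w => ∃ π : ℕ → List D, IsPathFrom T π w ∧ SatP T Lab ψ π 0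
  | .cnt k φ, w => ∃ s : Finset D, k ≤ s.card ∧
      ∀ d ∈ s, w ++ [d] ∈ T ∧ SatS T Lab φ (w ++ [d])
/-- Satisfaction of a CCTL* path formula at position `i` of the infinite path `π`. -/
def SatP {D AP : Type} (T : Set (List D)) (Lab : List D → Set AP) :
    PForm AP → (ℕ → List D) → ℕ → Prop
  | .state φ, π, i => SatS T Lab φ (π i)
  | .not ψ, π, i => ¬ SatP T Lab ψ π i
  | .and ψ χ, π, i => SatP T Lab ψ π i ∧ SatP T Lab χ π i
  | .next ψ, π, i => SatP T Lab ψ π (i + 1)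
  | .until_ ψ χ, π, i =>
      ∃ j, i ≤ j ∧ SatP T Lab χ π j ∧ ∀ k, i ≤ k → k < j → SatP T Lab ψ π k
end

mutual
/-- Length (number of symbols) of a CCTL* state formula. -/
def sizeS {AP : Type} : SForm AP → ℕ
  | .top => 1
  | .atom _ => 1
  | .not φ => 1 + sizeS φ
  | .and φ ψ => 1 + sizeS φ + sizeS ψ
  | .ex ψ => 1 + sizeP ψ
  | .cnt _ φ => 1 + sizeS φ
/-- Length (number of symbols) of a CCTL* path formula. -/
def sizeP {AP : Type} : PForm AP → ℕ
  | .state φ => sizeS φ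
  | .not ψ => 1 + sizeP ψ
  | .and ψ χ => 1 + sizeP ψ + sizeP χ
  | .next ψ => 1 + sizeP ψ
  | .until_ ψ χ => 1 + sizeP ψ + sizeP χ
end

/-- Membership of the Kripke tree `(T, Lab)` in the language `L_2`: there is an
infinite path `π` from the root on which `p` never holds, such that at every
even position `2i` the node `π(2i)` has some child satisfying `p`. -/
def InL2 (T : Set (List ℕ)) (Lab : List ℕ → Set Unit) : Prop :=
  ∃ π : ℕ → List ℕ, IsPathFrom T π [] ∧ (∀ i, Lab (π i) = ∅) ∧
    ∀ i, ∃ d : ℕ, π (2 * i) ++ [d] ∈ T ∧ () ∈ Lab (π (2 * i) ++ [d])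

/-!
The witnesses are the combs `comb z`: an infinite spine of `¬p` nodes, where spine node `i`
carries a `p`-tooth (an infinite chain of `p` nodes) iff `i < z` or `i ≡ z [ZMOD 2]`.
Such a comb is in `L_2` iff `z` is even. On the other hand `comb z` and `comb (z + 1)`
satisfy the same formulas of length `s` once `2 ^ s ≤ z`. This is proved by induction on
formulas, simultaneously for state formulas at the roots and for path formulas along
`Matched` paths, using that the subtree below spine node `i` of `comb z` is `comb (z - i)`
and that the subtree below a tooth does not depend on `z`.
-/

section Subtree

variable {D AP : Type}

def childTree (x : D) (T : Set (List D)) : Set (List D) := {w | x :: w ∈ T}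

def childLab (x : D) (L : List D → Set AP) : List D → Set AP := fun w => L (x :: w)

lemma isPathFrom_cons_iff {T : Set (List D)} {x : D} {τ : ℕ → List D} {w : List D} :
    IsPathFrom T (fun j => x :: τ j) (x :: w) ↔ IsPathFrom (childTree x T) τ w := by
  simp [IsPathFrom, childTree]

lemma IsPathFrom.eq_cons {T : Set (List D)} {π : ℕ → List D} {x : D} {w : List D}
    (h : IsPathFrom T π (x :: w)) : ∀ j, π j = x :: (π j).tail := by
  intro j
  induction j with
  | zero => simp [h.1]
  | succ j ih =>
    obtain ⟨d, hd⟩ := (h.2 j).2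
    rw [hd, ih]
    rfl

variable (T : Set (List D)) (L : List D → Set AP) (x : D)

mutual
theorem satS_cons_iff : ∀ (φ : SForm AP) (w : List D),
    SatS T L φ (x :: w) ↔ SatS (childTree x T) (childLab x L) φ w
  | .top, _ => Iff.rfl
  | .atom _, _ => Iff.rfl
  | .not φ, w => not_congr (satS_cons_iff φ w)
  | .and φ ψ, w => and_congr (satS_cons_iff φ w) (satS_cons_iff ψ w)
  | .cnt k φ, w => by
    simp only [SatS]
    refine exists_congr fun s => and_congr_right fun _ => forall₂_congr fun d _ => ?_
    rw [List.cons_append, satS_cons_iff φ]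
    rfl
  | .ex ψ, w => by
    simp only [SatS]
    constructor
    · rintro ⟨π, hπ, hψ⟩
      have hπ' : π = fun j => x :: (π j).tail := funext hπ.eq_cons
      rw [hπ'] at hπ hψ
      exact ⟨_, isPathFrom_cons_iff.mp hπ, (satP_cons_iff ψ _ 0).mp hψ⟩
    · rintro ⟨τ, hτ, hψ⟩
      exact ⟨_, isPathFrom_cons_iff.mpr hτ, (satP_cons_iff ψ τ 0).mpr hψ⟩

theorem satP_cons_iff : ∀ (ψ : PForm AP) (π : ℕ → List D) (i : ℕ),
    SatP T L ψ (fun j => x :: π j) i ↔ SatP (childTree x T) (childLab x L) ψ π i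
  | .state φ, π, i => satS_cons_iff φ (π i)
  | .not ψ, π, i => not_congr (satP_cons_iff ψ π i)
  | .and ψ χ, π, i => and_congr (satP_cons_iff ψ π i) (satP_cons_iff χ π i)
  | .next ψ, π, i => satP_cons_iff ψ π (i + 1)
  | .until_ ψ χ, π, _ =>
    exists_congr fun j => and_congr_right fun _ =>
      and_congr (satP_cons_iff χ π j) (forall₃_congr fun k _ _ => satP_cons_iff ψ π k)
end

theorem satP_shift : ∀ (ψ : PForm AP) (π : ℕ → List D) (c i : ℕ),
    SatP T L ψ (fun j => π (j + c)) i ↔ SatP T L ψ π (i + c)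
  | .state _, _, _, _ => Iff.rfl
  | .not ψ, π, c, i => not_congr (satP_shift ψ π c i)
  | .and ψ χ, π, c, i => and_congr (satP_shift ψ π c i) (satP_shift χ π c i)
  | .next ψ, π, c, i => by
    simp only [SatP, satP_shift ψ π c (i + 1), Nat.add_right_comm]
  | .until_ ψ χ, π, c, i => by
    simp only [SatP, satP_shift ψ π c, satP_shift χ π c]
    constructor
    · rintro ⟨j, hij, hχ, hψ⟩
      refine ⟨j + c, by omega, hχ, fun k hk hkj => ?_⟩
      obtain ⟨k, rfl⟩ := Nat.exists_eq_add_of_le' (le_trans (Nat.le_add_left c i) hk)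
      exact hψ k (by omega) (by omega)
    · rintro ⟨j, hij, hχ, hψ⟩
      obtain ⟨j, rfl⟩ := Nat.exists_eq_add_of_le' (le_trans (Nat.le_add_left c i) hij)
      exact ⟨j, by omega, hχ, fun k hk hkj => hψ (k + c) (by omega) (by omega)⟩

/-- `π'` stutters `π`: it repeats the first position of `π` once, up to `ψ` and `χ`. -/
lemma satP_until_iff_of_stutter {T T' : Set (List D)} {L L' : List D → Set AP}
    {ψ χ : PForm AP} {π π' : ℕ → List D}
    (hψ : SatP T L ψ π 0 ↔ SatP T' L' ψ π' 0)
    (hχ : SatP T L χ π 0 ↔ SatP T' L' χ π' 0)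
    (hψ' : ∀ j, SatP T' L' ψ π' (j + 1) ↔ SatP T L ψ π j)
    (hχ' : ∀ j, SatP T' L' χ π' (j + 1) ↔ SatP T L χ π j) :
    SatP T L (.until_ ψ χ) π 0 ↔ SatP T' L' (.until_ ψ χ) π' 0 := by
  simp only [SatP]
  constructor
  · rintro ⟨_ | j, -, hχj, hψk⟩
    · exact ⟨0, le_rfl, hχ.mp hχj, fun k _ hk => absurd hk (Nat.not_lt_zero k)⟩
    · refine ⟨j + 1 + 1, Nat.zero_le _, (hχ' _).mpr hχj, fun k _ hk => ?_⟩
      rcases k with _ | k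
      · exact hψ.mp (hψk 0 le_rfl (Nat.succ_pos j))
      · exact (hψ' k).mpr (hψk k (Nat.zero_le k) (by omega))
  · rintro ⟨_ | j, -, hχj, hψk⟩
    · exact ⟨0, le_rfl, hχ.mpr hχj, fun k _ hk => absurd hk (Nat.not_lt_zero k)⟩
    · exact ⟨j, Nat.zero_le j, (hχ' j).mp hχj,
        fun k _ hk => (hψ' k).mp (hψk (k + 1) (Nat.zero_le _) (by omega))⟩

end Subtree

namespace Comb

def spine (i : ℕ) : List ℕ := List.replicate i 0

def HasTooth (z : ℤ) (i : ℕ) : Prop := (i : ℤ) < z ∨ (i : ℤ) % 2 = z % 2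

def comb (z : ℤ) : Set (List ℕ) :=
  {w | (∃ i, w = spine i) ∨ ∃ i k, HasTooth z i ∧ w = spine i ++ 1 :: spine k}

def lab : List ℕ → Set Unit := fun w => {_u | 1 ∈ w}

lemma spine_succ (i : ℕ) : spine (i + 1) = 0 :: spine i := rfl

lemma spine_succ' (i : ℕ) : spine (i + 1) = spine i ++ [0] := List.replicate_succ' ..

lemma one_notMem_spine (i : ℕ) : 1 ∉ spine i := by
  simp [spine]

lemma spine_injective : Function.Injective spine := List.replicate_left_injective 0

lemma spine_ne_spine_append_one (i j k : ℕ) : spine j ≠ spine i ++ 1 :: spine k := by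
  intro h
  exact one_notMem_spine j (h ▸ by simp)

lemma hasTooth_sub {z : ℤ} {k b : ℕ} (hk : k ≤ b) :
    HasTooth (z - k) (b - k) ↔ HasTooth z b := by
  simp only [HasTooth]
  push_cast [hk]
  omega

lemma hasTooth_succ_succ (z : ℤ) (b : ℕ) : HasTooth (z + 1) (b + 1) ↔ HasTooth z b := by
  simp only [HasTooth]
  push_cast
  omega

lemma snoc_mem_comb {z : ℤ} {w : List ℕ} {d : ℕ} :
    w ++ [d] ∈ comb z ↔ (∃ i, w = spine i ∧ (d = 0 ∨ d = 1 ∧ HasTooth z i)) ∨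
      ∃ i k, HasTooth z i ∧ w = spine i ++ 1 :: spine k ∧ d = 0 := by
  have snoc_inj {u : List ℕ} {e : ℕ} (h : w ++ [d] = u ++ [e]) : w = u ∧ d = e := by
    simpa using List.append_inj' h rfl
  constructor
  · rintro (⟨_ | i, hi⟩ | ⟨i, _ | k, hik, h⟩)
    · simp [spine] at hi
    · obtain ⟨rfl, rfl⟩ := snoc_inj (hi.trans (spine_succ' i))
      exact Or.inl ⟨i, rfl, Or.inl rfl⟩
    · obtain ⟨rfl, rfl⟩ := snoc_inj (h.trans (show _ = spine i ++ [1] from rfl))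
      exact Or.inl ⟨i, rfl, Or.inr ⟨rfl, hik⟩⟩
    · obtain ⟨rfl, rfl⟩ :=
        snoc_inj (h.trans (show _ = (spine i ++ 1 :: spine k) ++ [0] by simp [spine_succ']))
      exact Or.inr ⟨i, k, hik, rfl, rfl⟩
  · rintro (⟨i, rfl, rfl | ⟨rfl, hi⟩⟩ | ⟨i, k, hik, rfl, rfl⟩)
    · exact Or.inl ⟨i + 1, (spine_succ' i).symm⟩
    · exact Or.inr ⟨i, 0, hi, rfl⟩
    · exact Or.inr ⟨i, k + 1, hik, by simp [spine_succ']⟩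

lemma isTree_comb (z : ℤ) : IsTree (comb z) := by
  refine ⟨Or.inl ⟨0, rfl⟩, fun w d hw => ?_⟩
  rcases snoc_mem_comb.mp hw with ⟨i, rfl, -⟩ | ⟨i, k, hik, rfl, -⟩
  · exact Or.inl ⟨i, rfl⟩
  · exact Or.inr ⟨i, k, hik, rfl⟩

lemma nonBlocking_comb (z : ℤ) : NonBlocking (comb z) := by
  rintro w (⟨i, rfl⟩ | ⟨i, k, hik, rfl⟩)
  · exact ⟨0, snoc_mem_comb.mpr (Or.inl ⟨i, rfl, Or.inl rfl⟩)⟩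
  · exact ⟨0, snoc_mem_comb.mpr (Or.inr ⟨i, k, hik, rfl, rfl⟩)⟩

lemma childTree_zero_comb (z : ℤ) : childTree 0 (comb (z + 1)) = comb z := by
  ext w
  constructor
  · rintro (⟨_ | i, hi⟩ | ⟨_ | i, k, hik, h⟩)
    · simp [spine] at hi
    · exact Or.inl ⟨i, List.cons_injective hi⟩
    · simp [spine] at h
    · exact Or.inr ⟨i, k, (hasTooth_succ_succ z i).mp hik, List.cons_injective h⟩
  · rintro (⟨i, rfl⟩ | ⟨i, k, hik, rfl⟩)
    · exact Or.inl ⟨i + 1, rfl⟩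
    · exact Or.inr ⟨i + 1, k, (hasTooth_succ_succ z i).mpr hik, rfl⟩

lemma childLab_zero_lab : childLab 0 lab = lab := by
  ext w
  simp [childLab, lab]

lemma childTree_one_comb {z : ℤ} (hz : HasTooth z 0) :
    childTree 1 (comb z) = Set.range spine := by
  ext w
  constructor
  · rintro (⟨_ | i, hi⟩ | ⟨_ | i, k, -, h⟩)
    · simp [spine] at hi
    · simp [spine_succ] at hi
    · exact ⟨k, (List.cons_injective h).symm⟩
    · simp [spine_succ] at h
  · rintro ⟨k, rfl⟩
    exact Or.inr ⟨0, k, hz, rfl⟩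

lemma singleton_mem_comb {z : ℤ} {d : ℕ} :
    [d] ∈ comb z ↔ d = 0 ∨ d = 1 ∧ HasTooth z 0 := by
  rw [← List.nil_append [d], snoc_mem_comb]
  constructor
  · rintro (⟨i, hi, hd⟩ | ⟨i, k, -, h, -⟩)
    · obtain rfl : i = 0 := by simpa [spine] using (congrArg List.length hi).symm
      exact hd
    · simp at h
  · exact fun hd => Or.inl ⟨0, rfl, hd⟩

lemma satS_comb_cons_zero (z : ℤ) (φ : SForm Unit) (w : List ℕ) :
    SatS (comb (z + 1)) lab φ (0 :: w) ↔ SatS (comb z) lab φ w := by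
  rw [satS_cons_iff, childTree_zero_comb, childLab_zero_lab]

lemma satS_comb_cons_one {z : ℤ} (hz : HasTooth z 0) (φ : SForm Unit) (w : List ℕ) :
    SatS (comb z) lab φ (1 :: w) ↔ SatS (Set.range spine) (childLab 1 lab) φ w := by
  rw [satS_cons_iff, childTree_one_comb hz]

lemma satP_comb_cons_zero (z : ℤ) (ψ : PForm Unit) (π : ℕ → List ℕ) (i : ℕ) :
    SatP (comb (z + 1)) lab ψ (fun j => 0 :: π j) i ↔ SatP (comb z) lab ψ π i := by
  rw [satP_cons_iff, childTree_zero_comb, childLab_zero_lab]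

lemma satP_comb_cons_one {z : ℤ} (hz : HasTooth z 0) (ψ : PForm Unit) (π : ℕ → List ℕ)
    (i : ℕ) :
    SatP (comb z) lab ψ (fun j => 1 :: π j) i ↔
      SatP (Set.range spine) (childLab 1 lab) ψ π i := by
  rw [satP_cons_iff, childTree_one_comb hz]

def branch (b j : ℕ) : List ℕ := if j ≤ b then spine j else spine b ++ 1 :: spine (j - b - 1)

/-- `none` is the spine, `some b` leaves it along the tooth at spine node `b`. -/
def combPath : Option ℕ → ℕ → List ℕ
  | none => spine
  | some b => branch b

def ValidPath (z : ℤ) : Option ℕ → Prop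
  | none => True
  | some b => HasTooth z b

lemma branch_of_le {b j : ℕ} (h : j ≤ b) : branch b j = spine j := if_pos h

lemma branch_add_succ (b m : ℕ) : branch b (m + (b + 1)) = spine b ++ 1 :: spine m := by
  rw [branch, if_neg (by omega), show m + (b + 1) - b - 1 = m by omega]

lemma combPath_zero (t : Option ℕ) : combPath t 0 = [] := by
  cases t <;> simp [combPath, branch, spine]

lemma combPath_map_succ (t : Option ℕ) (j : ℕ) :
    combPath (t.map (· + 1)) (j + 1) = 0 :: combPath t j := by
  rcases t with _ | b
  · rfl
  · simp only [Option.map_some, combPath, branch, Nat.add_le_add_iff_right]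
    split_ifs
    · rfl
    · simp [spine_succ]

lemma isPathFrom_combPath {z : ℤ} {t : Option ℕ} (ht : ValidPath z t) :
    IsPathFrom (comb z) (combPath t) [] := by
  refine ⟨combPath_zero t, fun j => ⟨?_, ?_⟩⟩
  · rcases t with _ | b
    · exact Or.inl ⟨j, rfl⟩
    · simp only [combPath, branch]
      split_ifs
      · exact Or.inl ⟨j, rfl⟩
      · exact Or.inr ⟨b, _, ht, rfl⟩
  · rcases t with _ | b
    · exact ⟨0, spine_succ' j⟩
    · simp only [combPath, branch]
      by_cases hjb : j + 1 ≤ b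
      · exact ⟨0, by simp [hjb, show j ≤ b by omega, spine_succ']⟩
      by_cases hj : j = b
      · exact ⟨1, by simp [hj, spine]⟩
      · exact ⟨0, by simp [hjb, show ¬j ≤ b by omega,
          show j + 1 - b - 1 = j - b - 1 + 1 by omega, spine_succ']⟩

section PathClassification

variable {z : ℤ} {π : ℕ → List ℕ}

lemma eq_spine_of_isPathFrom (hπ : IsPathFrom (comb z) π []) {j : ℕ}
    (hj : ∀ b < j, π (b + 1) ≠ spine b ++ [1]) : π j = spine j := by
  induction j with
  | zero => exact hπ.1
  | succ j ih =>
    obtain ⟨d, hd⟩ := (hπ.2 j).2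
    rw [ih fun b hb => hj b (by omega)] at hd
    have hmem := (hπ.2 (j + 1)).1
    rw [hd] at hmem ⊢
    rcases snoc_mem_comb.mp hmem with ⟨i, hi, rfl | ⟨rfl, -⟩⟩ | ⟨i, k, -, h, -⟩
    · exact (spine_succ' j).symm
    · exact absurd hd (hj j (Nat.lt_succ_self j))
    · exact absurd h (spine_ne_spine_append_one i j k)

lemma eq_tooth_of_isPathFrom (hπ : IsPathFrom (comb z) π []) {b : ℕ}
    (hb : π (b + 1) = spine b ++ [1]) (m : ℕ) : π (m + (b + 1)) = spine b ++ 1 :: spine m := by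
  induction m with
  | zero => rw [Nat.zero_add]; exact hb
  | succ m ih =>
    obtain ⟨d, hd⟩ := (hπ.2 (m + (b + 1))).2
    have hmem := (hπ.2 (m + (b + 1) + 1)).1
    rw [hd, ih] at hmem
    rw [Nat.add_right_comm, hd, ih]
    rcases snoc_mem_comb.mp hmem with ⟨i, h, -⟩ | ⟨_, _, -, -, rfl⟩
    · exact absurd h.symm (spine_ne_spine_append_one b i m)
    · simp [spine_succ']

lemma exists_combPath_eq_of_isPathFrom (hπ : IsPathFrom (comb z) π []) :
    ∃ t, ValidPath z t ∧ π = combPath t := by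
  by_cases hleave : ∃ b, π (b + 1) = spine b ++ [1]
  · classical
    set b := Nat.find hleave
    have hb : π (b + 1) = spine b ++ [1] := Nat.find_spec hleave
    refine ⟨some b, ?_, funext fun j => ?_⟩
    · have hmem := (hπ.2 (b + 1)).1
      rw [hb] at hmem
      rcases snoc_mem_comb.mp hmem with ⟨i, hi, h | ⟨-, hi'⟩⟩ | ⟨_, _, -, -, h⟩
      · exact absurd h (by norm_num)
      · rwa [spine_injective hi]
      · exact absurd h (by norm_num)
    · by_cases hj : j ≤ b
      · rw [combPath, branch_of_le hj]
        exact eq_spine_of_isPathFrom hπ fun b' hb' => Nat.find_min hleave (by omega)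
      · obtain ⟨m, rfl⟩ := Nat.exists_eq_add_of_le' (show b + 1 ≤ j by omega)
        rw [combPath, branch_add_succ]
        exact eq_tooth_of_isPathFrom hπ hb m
  · simp only [not_exists] at hleave
    exact ⟨none, trivial, funext fun j => eq_spine_of_isPathFrom hπ fun b _ => hleave b⟩

end PathClassification

lemma exists_isPathFrom_comb_iff {z : ℤ} {P : (ℕ → List ℕ) → Prop} :
    (∃ π, IsPathFrom (comb z) π [] ∧ P π) ↔ ∃ t, ValidPath z t ∧ P (combPath t) := by
  constructor
  · rintro ⟨π, hπ, hP⟩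
    obtain ⟨t, ht, rfl⟩ := exists_combPath_eq_of_isPathFrom hπ
    exact ⟨t, ht, hP⟩
  · rintro ⟨t, ht, hP⟩
    exact ⟨_, isPathFrom_combPath ht, hP⟩

lemma inL2_comb_iff (z : ℤ) : InL2 (comb z) lab ↔ ∀ i, HasTooth z (2 * i) := by
  have tooth_iff : ∀ i, (∃ d, spine i ++ [d] ∈ comb z ∧ () ∈ lab (spine i ++ [d])) ↔
      HasTooth z i := fun i => by
    constructor
    · rintro ⟨d, hmem, hd⟩
      have hd : d = 1 := by simpa [lab, one_notMem_spine, eq_comm] using hd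
      rcases snoc_mem_comb.mp hmem with ⟨i', hi, h | ⟨-, hi'⟩⟩ | ⟨_, _, -, -, h⟩
      · omega
      · rwa [spine_injective hi]
      · omega
    · exact fun hi =>
        ⟨1, snoc_mem_comb.mpr (Or.inl ⟨i, rfl, Or.inr ⟨rfl, hi⟩⟩), by simp [lab]⟩
  constructor
  · rintro ⟨π, hπ, hπlab, htooth⟩
    obtain ⟨t, -, rfl⟩ := exists_combPath_eq_of_isPathFrom hπ
    rcases t with _ | b
    · exact fun i => (tooth_iff (2 * i)).mp (htooth i)
    · have hlab := hπlab (0 + (b + 1))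
      rw [combPath, branch_add_succ] at hlab
      exact absurd (hlab ▸ by simp [lab] : () ∈ (∅ : Set Unit)) id
  · intro h
    refine ⟨spine, isPathFrom_combPath (t := none) trivial, fun i => ?_,
      fun i => (tooth_iff (2 * i)).mpr (h i)⟩
    simp [lab, one_notMem_spine]

lemma inL2_comb_iff_even (z : ℤ) : InL2 (comb z) lab ↔ Even z := by
  rw [inL2_comb_iff, Int.even_iff]
  constructor
  · intro h
    have := h z.toNat
    simp only [HasTooth] at this
    omega
  · intro h i
    right
    push_cast
    omega

lemma satP_combPath_map_succ (z : ℤ) (t : Option ℕ) (ψ : PForm Unit) (i : ℕ) :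
    SatP (comb (z + 1)) lab ψ (combPath (t.map (· + 1))) (i + 1) ↔
      SatP (comb z) lab ψ (combPath t) i := by
  rw [← satP_shift]
  simp only [combPath_map_succ]
  exact satP_comb_cons_zero z ψ _ i

lemma satP_spine_succ (z : ℤ) (ψ : PForm Unit) (i : ℕ) :
    SatP (comb (z + 1)) lab ψ spine (i + 1) ↔ SatP (comb z) lab ψ spine i :=
  satP_combPath_map_succ z none ψ i

lemma satP_branch_succ (z : ℤ) (b : ℕ) (ψ : PForm Unit) (i : ℕ) :
    SatP (comb (z + 1)) lab ψ (branch (b + 1)) (i + 1) ↔ SatP (comb z) lab ψ (branch b) i :=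
  satP_combPath_map_succ z (some b) ψ i

lemma satP_branch_of_le {ψ : PForm Unit} {k b : ℕ} (hk : k ≤ b) (z : ℤ) :
    SatP (comb z) lab ψ (branch b) k ↔ SatP (comb (z - k)) lab ψ (branch (b - k)) 0 := by
  induction k generalizing z b with
  | zero => simp
  | succ k ih =>
    obtain ⟨b, rfl⟩ : ∃ b', b = b' + 1 := ⟨b - 1, by omega⟩
    have hshift := satP_branch_succ (z - 1) b ψ k
    rw [sub_add_cancel] at hshift
    rw [hshift, ih (by omega), Nat.add_sub_add_right, Nat.cast_succ, sub_sub,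
      add_comm 1]

lemma satP_branch_add_succ {z : ℤ} {b : ℕ} (hb : HasTooth z b) (ψ : PForm Unit) (m : ℕ) :
    SatP (comb z) lab ψ (branch b) (m + (b + 1)) ↔
      SatP (Set.range spine) (childLab 1 lab) ψ spine m := by
  induction b generalizing z with
  | zero =>
    rw [← satP_shift]
    simp only [branch_add_succ]
    exact satP_comb_cons_one hb ψ spine m
  | succ b ih =>
    obtain ⟨z, rfl⟩ : ∃ z', z = z' + 1 := ⟨z - 1, by ring⟩
    rw [← Nat.add_assoc, satP_branch_succ]
    exact ih ((hasTooth_succ_succ z b).mp hb)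

/-- How a path of `comb z` (left) and a path of `comb (z + 1)` (right) are paired against
formulas of length `s`: both follow the spine, both take the same tooth at least `2 ^ s`
nodes before spine node `z`, or the right one takes its tooth one node later, at least
`2 ^ s` nodes after the root. -/
inductive Matched (s : ℕ) (z : ℤ) : Option ℕ → Option ℕ → Prop
  | spine : Matched s z none none
  | near (b : ℕ) : (b : ℤ) + 2 ^ s ≤ z → Matched s z (some b) (some b)
  | far (b : ℕ) : (2 : ℤ) ^ s ≤ b → Matched s z (some b) (some (b + 1))

def StateEquiv (s : ℕ) (φ : SForm Unit) : Prop :=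
  ∀ z : ℤ, 2 ^ s ≤ z → (SatS (comb z) lab φ [] ↔ SatS (comb (z + 1)) lab φ [])

def PathEquiv (s : ℕ) (ψ : PForm Unit) : Prop :=
  ∀ z : ℤ, 2 ^ s ≤ z → ∀ t u, ValidPath z t → ValidPath (z + 1) u →
    Matched s z t u →
      (SatP (comb z) lab ψ (combPath t) 0 ↔ SatP (comb (z + 1)) lab ψ (combPath u) 0)

variable {s s' : ℕ} {z : ℤ} {t u : Option ℕ} {φ φ' : SForm Unit} {ψ ψ' : PForm Unit}

lemma Matched.mono (h : Matched s' z t u) (hs : s ≤ s') : Matched s z t u := by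
  have := pow_le_pow_right₀ (one_le_two : (1 : ℤ) ≤ 2) hs
  cases h with
  | spine => exact .spine
  | near b hb => exact .near b (by omega)
  | far b hb => exact .far b (by omega)

lemma exists_matched_of_validPath_left (hz : 2 ^ (s + 1) ≤ z) (ht : ValidPath z t) :
    ∃ u, ValidPath (z + 1) u ∧ Matched s z t u := by
  have hs : (0 : ℤ) < 2 ^ s := by positivity
  rw [pow_succ] at hz
  rcases t with _ | b
  · exact ⟨none, trivial, .spine⟩
  by_cases hb : (b : ℤ) + 2 ^ s ≤ z
  · exact ⟨some b, Or.inl (by omega), .near b hb⟩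
  · exact ⟨some (b + 1), (hasTooth_succ_succ z b).mpr ht, .far b (by omega)⟩

lemma exists_matched_of_validPath_right (hz : 2 ^ (s + 1) ≤ z) (hu : ValidPath (z + 1) u) :
    ∃ t, ValidPath z t ∧ Matched s z t u := by
  have hs : (0 : ℤ) < 2 ^ s := by positivity
  rw [pow_succ] at hz
  rcases u with _ | c
  · exact ⟨none, trivial, .spine⟩
  by_cases hc : (c : ℤ) + 2 ^ s ≤ z
  · exact ⟨some c, Or.inl (by omega), .near c hc⟩
  · obtain ⟨b, rfl⟩ : ∃ b, c = b + 1 := ⟨c - 1, by omega⟩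
    exact ⟨some b, (hasTooth_succ_succ z b).mp hu, .far b (by push_cast at hc; omega)⟩

lemma StateEquiv.mono (h : StateEquiv s φ) (hs : s ≤ s') : StateEquiv s' φ :=
  fun z hz => h z ((pow_le_pow_right₀ one_le_two hs).trans hz)

lemma PathEquiv.mono (h : PathEquiv s ψ) (hs : s ≤ s') : PathEquiv s' ψ :=
  fun z hz t u ht hu hm =>
    h z ((pow_le_pow_right₀ one_le_two hs).trans hz) t u ht hu (hm.mono hs)

lemma StateEquiv.not (h : StateEquiv s φ) : StateEquiv s (.not φ) :=
  fun z hz => not_congr (h z hz)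

lemma StateEquiv.and (h : StateEquiv s φ) (h' : StateEquiv s φ') : StateEquiv s (.and φ φ') :=
  fun z hz => and_congr (h z hz) (h' z hz)

lemma StateEquiv.cnt (h : StateEquiv s φ) (k : ℕ) : StateEquiv (s + 1) (.cnt k φ) := by
  intro z hz
  have hs : (0 : ℤ) < 2 ^ s := by positivity
  rw [pow_succ] at hz
  obtain ⟨z, rfl⟩ : ∃ z', z = z' + 1 := ⟨z - 1, by ring⟩
  have tooth : ∀ n : ℤ, 0 < n → HasTooth n 0 := fun n hn => Or.inl (by exact_mod_cast hn)
  have child_iff : ∀ d, ([d] ∈ comb (z + 1) ∧ SatS (comb (z + 1)) lab φ [d]) ↔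
      ([d] ∈ comb (z + 1 + 1) ∧ SatS (comb (z + 1 + 1)) lab φ [d]) := by
    intro d
    simp only [singleton_mem_comb]
    rcases Nat.lt_trichotomy d 1 with hd | rfl | hd
    · obtain rfl : d = 0 := by omega
      simp only [true_or, true_and, satS_comb_cons_zero]
      exact h z (by omega)
    · simp only [tooth (z + 1) (by omega), tooth (z + 1 + 1) (by omega), true_and]
      rw [satS_comb_cons_one (tooth _ (by omega)), satS_comb_cons_one (tooth _ (by omega))]
    · simp [show d ≠ 0 by omega, show d ≠ 1 by omega]
  simp only [SatS, List.nil_append]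
  exact exists_congr fun S => and_congr_right fun _ => forall₂_congr fun d _ => child_iff d

lemma StateEquiv.ex (h : PathEquiv s ψ) : StateEquiv (s + 1) (.ex ψ) := by
  intro z hz
  simp only [SatS]
  rw [exists_isPathFrom_comb_iff, exists_isPathFrom_comb_iff]
  have hz' : 2 ^ s ≤ z := (pow_le_pow_right₀ one_le_two (Nat.le_succ s)).trans hz
  constructor
  · rintro ⟨t, ht, hψ⟩
    obtain ⟨u, hu, hm⟩ := exists_matched_of_validPath_left hz ht
    exact ⟨u, hu, (h z hz' t u ht hu hm).mp hψ⟩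
  · rintro ⟨u, hu, hψ⟩
    obtain ⟨t, ht, hm⟩ := exists_matched_of_validPath_right hz hu
    exact ⟨t, ht, (h z hz' t u ht hu hm).mpr hψ⟩

lemma PathEquiv.state (h : StateEquiv s φ) : PathEquiv s (.state φ) := by
  intro z hz t u _ _ _
  simp only [SatP, combPath_zero]
  exact h z hz

lemma PathEquiv.not (h : PathEquiv s ψ) : PathEquiv s (.not ψ) :=
  fun z hz t u ht hu hm => not_congr (h z hz t u ht hu hm)

lemma PathEquiv.and (h : PathEquiv s ψ) (h' : PathEquiv s ψ') : PathEquiv s (.and ψ ψ') :=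
  fun z hz t u ht hu hm => and_congr (h z hz t u ht hu hm) (h' z hz t u ht hu hm)

/-- Along a tooth taken at the same node `b`, the two paths agree position by position:
below `b` by the induction hypothesis applied at the subtree `comb (z - k)`, beyond `b`
because both paths are in the same all-`p` chain. -/
lemma PathEquiv.satP_branch_iff (h : PathEquiv s ψ) {b : ℕ} (hb : HasTooth z b)
    (hb' : HasTooth (z + 1) b) (hbz : (b : ℤ) + 2 ^ s ≤ z) (k : ℕ) :
    SatP (comb z) lab ψ (branch b) k ↔ SatP (comb (z + 1)) lab ψ (branch b) k := by
  by_cases hk : k ≤ b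
  · rw [satP_branch_of_le hk, satP_branch_of_le hk, add_sub_right_comm]
    have hb'' := (hasTooth_sub hk).mpr hb'
    rw [add_sub_right_comm] at hb''
    exact h (z - k) (by omega) (some (b - k)) (some (b - k)) ((hasTooth_sub hk).mpr hb) hb''
      (.near _ (by push_cast [hk]; omega))
  · obtain ⟨m, rfl⟩ := Nat.exists_eq_add_of_le' (show b + 1 ≤ k by omega)
    rw [satP_branch_add_succ hb, satP_branch_add_succ hb']

lemma PathEquiv.next (h : PathEquiv s ψ) : PathEquiv (s + 1) (.next ψ) := by
  intro z hz t u ht hu hm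
  have hs : (0 : ℤ) < 2 ^ s := by positivity
  rw [pow_succ] at hz
  show SatP _ _ ψ _ (0 + 1) ↔ SatP _ _ ψ _ (0 + 1)
  cases hm with
  | near b hb => exact h.satP_branch_iff ht hu (by omega) 1
  | spine =>
    obtain ⟨z, rfl⟩ : ∃ z', z = z' + 1 := ⟨z - 1, by ring⟩
    rw [combPath, satP_spine_succ, satP_spine_succ]
    exact h z (by omega) none none trivial trivial .spine
  | far b hb =>
    obtain ⟨z, rfl⟩ : ∃ z', z = z' + 1 := ⟨z - 1, by ring⟩
    obtain ⟨b, rfl⟩ : ∃ b', b = b' + 1 := ⟨b - 1, by omega⟩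
    rw [combPath, combPath, satP_branch_succ, satP_branch_succ]
    exact h z (by omega) (some b) (some (b + 1)) ((hasTooth_succ_succ z b).mp ht) ht
      (.far b (by push_cast at hb; omega))

lemma PathEquiv.until (h : PathEquiv s ψ) (h' : PathEquiv s ψ') :
    PathEquiv (s + 1) (.until_ ψ ψ') := by
  intro z hz t u ht hu hm
  have hz' : 2 ^ s ≤ z := (pow_le_pow_right₀ one_le_two (Nat.le_succ s)).trans hz
  have hm' := hm.mono (Nat.le_succ s)
  cases hm with
  | near b hb =>
    have hbz : (b : ℤ) + 2 ^ s ≤ z := by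
      have : (0 : ℤ) < 2 ^ s := by positivity
      rw [pow_succ] at hb
      omega
    exact exists_congr fun j => and_congr_right fun _ =>
      and_congr (h'.satP_branch_iff ht hu hbz j)
        (forall₃_congr fun k _ _ => h.satP_branch_iff ht hu hbz k)
  | spine =>
    exact satP_until_iff_of_stutter (h z hz' _ _ ht hu hm') (h' z hz' _ _ ht hu hm')
      (satP_combPath_map_succ z none ψ) (satP_combPath_map_succ z none ψ')
  | far b hb =>
    exact satP_until_iff_of_stutter (h z hz' _ _ ht hu hm') (h' z hz' _ _ ht hu hm')
      (satP_combPath_map_succ z (some b) ψ) (satP_combPath_map_succ z (some b) ψ')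

mutual
theorem stateEquiv_sizeS : ∀ φ : SForm Unit, StateEquiv (sizeS φ) φ
  | .top => fun _ _ => Iff.rfl
  | .atom _ => fun _ _ => Iff.rfl
  | .not φ => (StateEquiv.not (stateEquiv_sizeS φ)).mono (by simp only [sizeS]; omega)
  | .and φ φ' => StateEquiv.and ((stateEquiv_sizeS φ).mono (by simp only [sizeS]; omega))
      ((stateEquiv_sizeS φ').mono (by simp only [sizeS]; omega))
  | .ex ψ => (StateEquiv.ex (pathEquiv_sizeP ψ)).mono (by simp only [sizeS]; omega)
  | .cnt k φ => (StateEquiv.cnt (stateEquiv_sizeS φ) k).mono (by simp only [sizeS]; omega)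

theorem pathEquiv_sizeP : ∀ ψ : PForm Unit, PathEquiv (sizeP ψ) ψ
  | .state φ => PathEquiv.state (stateEquiv_sizeS φ)
  | .not ψ => (PathEquiv.not (pathEquiv_sizeP ψ)).mono (by simp only [sizeP]; omega)
  | .and ψ ψ' => PathEquiv.and ((pathEquiv_sizeP ψ).mono (by simp only [sizeP]; omega))
      ((pathEquiv_sizeP ψ').mono (by simp only [sizeP]; omega))
  | .next ψ => (PathEquiv.next (pathEquiv_sizeP ψ)).mono (by simp only [sizeP]; omega)
  | .until_ ψ ψ' => (PathEquiv.until (s := sizeP ψ + sizeP ψ')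
      ((pathEquiv_sizeP ψ).mono (by omega)) ((pathEquiv_sizeP ψ').mono (by omega))).mono
      (by simp only [sizeP]; omega)
end

end Comb

/-- No CCTL* formula defines the language `L_2`: there is no state formula `φ`
such that, for every (nonblocking) Kripke tree, the tree belongs to `L_2` iff
its root satisfies `φ`. -/
theorem stmt15 :
    ¬ ∃ φ : SForm Unit, ∀ (T : Set (List ℕ)) (Lab : List ℕ → Set Unit),
      IsTree T → NonBlocking T → (InL2 T Lab ↔ SatS T Lab φ []) := by
  rintro ⟨φ, hφ⟩
  have hpos : (0 : ℤ) < 2 ^ sizeS φ := by positivity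
  have hroot := Comb.stateEquiv_sizeS φ (2 * 2 ^ sizeS φ) (by omega)
  have heven := hφ _ Comb.lab (Comb.isTree_comb (2 * 2 ^ sizeS φ)) (Comb.nonBlocking_comb _)
  have hodd := hφ _ Comb.lab (Comb.isTree_comb (2 * 2 ^ sizeS φ + 1)) (Comb.nonBlocking_comb _)
  rw [Comb.inL2_comb_iff_even] at heven hodd
  exact Int.not_even_two_mul_add_one _ (hodd.mpr (hroot.mp (heven.mp (even_two_mul _))))
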